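/- arXiv:1711.00707 — 2 statements merged into one kernel-verified Lean document; each statement's English description precedes it below -/
import Mathlib

section
/- Let z_0,...,z_m be pairwise distinct complex numbers and w_0,...,w_m nonzero complex numbers, and let r_j(z) = (w_j/(z - z_j)) / (∑_{i=0}^m w_i/(z - z_i)). Define the (m+1)×m lower bidiagonal matrix W with entries W_{j,j} = -w_{j+1} and W_{j+1,j} = w_j (indices 0-based, columns j = 0,...,m-1), and the diagonal matrix Z = diag(z_0,...,z_m). Then for every z where all r_j are defined, the row vector identity z · [r_0(z),...,r_m(z)] · W = [r_0(z),...,r_m(z)] · (Z W) holds. -/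
open Finset Matrix

/-- The `(m+1) × m` lower-bidiagonal barycentric weight matrix:
`W j j = -w (j+1)` and `W (j+1) j = w j`. -/
def baryW (m : ℕ) (w : Fin (m + 1) → ℂ) : Matrix (Fin (m + 1)) (Fin m) ℂ :=
  Matrix.of fun i j =>
    if i = j.castSucc then -w j.succ else if i = j.succ then w j.castSucc else 0

/-! Since `(ζ - z i) r i = w i / S`, where `S` is the common denominator, `ζ r W - r Z W = S⁻¹ (w W)`,
and `w W = 0`: column `j` of `W` contributes `w j w (j+1) - w (j+1) w j`. -/

theorem smul_vecMul_sub_vecMul_diagonal_mul {R ι κ : Type*} [CommRing R] [Fintype ι]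
    [DecidableEq ι] (c : R) (z v : ι → R) (A : Matrix ι κ R) :
    c • (v ᵥ* A) - v ᵥ* (diagonal z * A) = (fun i => (c - z i) * v i) ᵥ* A := by
  rw [← vecMul_vecMul, ← smul_vecMul, ← sub_vecMul]
  congr 1
  funext i
  simp only [Pi.sub_apply, Pi.smul_apply, smul_eq_mul, vecMul_diagonal]
  ring

theorem vecMul_baryW_apply (m : ℕ) (w v : Fin (m + 1) → ℂ) (j : Fin m) :
    (v ᵥ* baryW m w) j = w j.castSucc * v j.succ - w j.succ * v j.castSucc := by
  have hne : j.castSucc ≠ j.succ := (Fin.castSucc_lt_succ (i := j)).ne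
  rw [vecMul, dotProduct, Fintype.sum_eq_add j.castSucc j.succ hne]
  · simp only [baryW, of_apply, ↓reduceIte, mul_neg, hne.symm]
    ring
  · rintro i ⟨hi₁, hi₂⟩
    simp [baryW, hi₁, hi₂]

theorem vecMul_baryW_self (m : ℕ) (w : Fin (m + 1) → ℂ) : w ᵥ* baryW m w = 0 :=
  funext fun j => by rw [vecMul_baryW_apply, mul_comm, sub_self, Pi.zero_apply]

theorem bary_rational_arnoldi_general (m : ℕ) (z w : Fin (m + 1) → ℂ)
    (ζ : ℂ) (hζ : ∀ i, ζ ≠ z i) :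
    ζ • Matrix.vecMul (fun i => (w i / (ζ - z i)) / (∑ i', w i' / (ζ - z i')))
        (baryW m w) =
      Matrix.vecMul (fun i => (w i / (ζ - z i)) / (∑ i', w i' / (ζ - z i')))
        (Matrix.diagonal z * baryW m w) := by
  set S := ∑ i', w i' / (ζ - z i')
  have hscaled : (fun i => (ζ - z i) * (w i / (ζ - z i) / S)) = S⁻¹ • w := by
    funext i
    have hζi : ζ - z i ≠ 0 := sub_ne_zero.2 (hζ i)
    simp only [Pi.smul_apply, smul_eq_mul]
    field_simp
  rw [← sub_eq_zero, smul_vecMul_sub_vecMul_diagonal_mul, hscaled, smul_vecMul,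
    vecMul_baryW_self, smul_zero]

/-- the rational Arnoldi decomposition
`z · [r_0,...,r_m] W = [r_0,...,r_m] (Z W)` for the barycentric basis. -/
theorem bary_rational_arnoldi (m : ℕ) (z w : Fin (m + 1) → ℂ)
    (hz : Function.Injective z) (hw : ∀ j, w j ≠ 0) (ζ : ℂ)
    (hζ : ∀ i, ζ ≠ z i) (hd : (∑ i, w i / (ζ - z i)) ≠ 0) :
    ζ • Matrix.vecMul (fun i => (w i / (ζ - z i)) / (∑ i', w i' / (ζ - z i')))
        (baryW m w) =
      Matrix.vecMul (fun i => (w i / (ζ - z i)) / (∑ i', w i' / (ζ - z i')))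
        (Matrix.diagonal z * baryW m w) :=
  bary_rational_arnoldi_general m z w ζ hζ
end

section
/- Let z_0,...,z_m be pairwise distinct and w_0,...,w_m nonzero complex numbers, and let r_j(z) = (w_j/(z−z_j)) / (∑_{i=0}^m w_i/(z−z_i)). Define for j = 1,...,m: σ_{j−1} := z_{j−1}, k_j := 1, β_j := −w_{j−1}/w_j, and h_j := z_j. Then the functions r_j satisfy the rational Newton recursion r_j(z) = (z − σ_{j−1}) / (β_j (h_j − k_j z)) · r_{j−1}(z) for all j = 1,...,m and all z where defined. -/
open Finset

/-- the barycentric basis functions satisfy the rational Newton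
recursion with `σ_{j-1} = z_{j-1}`, `k_j = 1`, `h_j = z_j`, `β_j = -w_{j-1}/w_j`. -/
theorem bary_newton_recursion (m : ℕ) (z w : Fin (m + 1) → ℂ)
    (hz : Function.Injective z) (hw : ∀ j, w j ≠ 0) (j : Fin m) (ζ : ℂ)
    (hζ : ∀ i, ζ ≠ z i) (hd : (∑ i, w i / (ζ - z i)) ≠ 0) :
    (w j.succ / (ζ - z j.succ)) / (∑ i, w i / (ζ - z i)) =
      (ζ - z j.castSucc) /
          ((-w j.castSucc / w j.succ) * (z j.succ - 1 * ζ)) *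
        ((w j.castSucc / (ζ - z j.castSucc)) / (∑ i, w i / (ζ - z i))) := by
  have h1 : ζ - z j.succ ≠ 0 := sub_ne_zero.mpr (hζ _)
  have h2 : ζ - z j.castSucc ≠ 0 := sub_ne_zero.mpr (hζ _)
  have h3 := hw j.succ
  have h4 := hw j.castSucc
  have h5 : z j.succ - 1 * ζ ≠ 0 := by
    intro h; apply h1; linear_combination -h
  have key : (ζ - z j.castSucc) / ((-w j.castSucc / w j.succ) * (z j.succ - 1 * ζ)) *
      (w j.castSucc / (ζ - z j.castSucc)) = w j.succ / (ζ - z j.succ) := by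
    rw [div_mul_div_comm, div_eq_div_iff
      (mul_ne_zero (mul_ne_zero (div_ne_zero (neg_ne_zero.mpr h4) h3) h5) h2) h1]
    field_simp
    ring
  rw [← mul_div_assoc, key]
end
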